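/- arXiv:1108.4268 — 3 statements merged into one kernel-verified Lean document; each statement's English description precedes it below -/
import Mathlib

section
/- Let L ⊂ L' be a field extension with L algebraically closed, and let S_L = L[x_1,…,x_n] ⊂ S_{L'} = L'[x_1,…,x_n]. For every prime ideal P ⊂ S_L, the extension P·S_{L'} is a prime ideal of S_{L'}. -/
/-!
Since `L[x]/P` is a domain and `L'[x]/P·L'[x] ≅ L' ⊗_L (L[x]/P)`, it suffices that the tensor
product of two domains over an algebraically closed field is a domain. A zero-divisor relation
`x * y = 0` in `B ⊗_L A` involves only a finitely generated subalgebra of `B`, so we may assume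
`B` finitely generated. Writing `x` and `y` in an `L`-basis of `A` with coefficients in `B`, the
Nullstellensatz gives an `L`-point `ψ : B → L` not killing a chosen nonzero coefficient of `x`
nor one of `y`; then `ψ ⊗ id` sends `x` and `y` to nonzero elements of the domain `A`,
contradicting `x * y = 0`.
-/

open TensorProduct

theorem exists_algHom_apply_ne_zero_of_isAlgClosed {K B : Type*} [Field K] [IsAlgClosed K]
    [CommRing B] [IsReduced B] [Algebra K B] [Algebra.FiniteType K B] {z : B} (hz : z ≠ 0) :
    ∃ ψ : B →ₐ[K] K, ψ z ≠ 0 := by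
  have : IsJacobsonRing B := isJacobsonRing_of_finiteType (A := K)
  obtain ⟨m, hm, hzm⟩ : ∃ m : Ideal B, m.IsMaximal ∧ z ∉ m := by
    by_contra! h
    have hz' : z ∈ (⊥ : Ideal B).jacobson := Submodule.mem_sInf.mpr fun J hJ => h J hJ.2
    rw [IsJacobsonRing.out' _ Ideal.isRadical_bot] at hz'
    exact hz hz'
  let := Ideal.Quotient.field m
  have : Module.Finite K (B ⧸ m) := finite_of_finite_type_of_isJacobsonRing K (B ⧸ m)
  let e : K ≃ₐ[K] B ⧸ m :=
    AlgEquiv.ofBijective (Algebra.ofId K _) IsAlgClosed.algebraMap_bijective_of_isIntegral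
  refine ⟨e.symm.toAlgHom.comp (Ideal.Quotient.mkₐ K m), ?_⟩
  simpa [Ideal.Quotient.eq_zero_iff_mem] using hzm

theorem Subalgebra.exists_fg_subset_range_map_val {K A B : Type*} [CommRing K] [CommRing A]
    [Algebra K A] [CommRing B] [Algebra K B] (s : Set (B ⊗[K] A)) (hs : s.Finite) :
    ∃ B' : Subalgebra K B, B'.FG ∧
      s ⊆ Set.range (Algebra.TensorProduct.map B'.val (AlgHom.id K A)) := by
  obtain ⟨M, hM, hsM⟩ := exists_finite_submodule_left_of_setFinite s hs
  obtain ⟨t, rfl⟩ := Module.Finite.iff_fg.mp hM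
  refine ⟨Algebra.adjoin K t, Subalgebra.fg_adjoin_finset t, hsM.trans ?_⟩
  have hle : Submodule.span K (t : Set B) ≤ Subalgebra.toSubmodule (Algebra.adjoin K t) :=
    Algebra.span_le_adjoin K _
  have hsubtype : (Submodule.span K (t : Set B)).subtype =
      (Algebra.adjoin K (t : Set B)).val.toLinearMap ∘ₗ Submodule.inclusion hle := rfl
  rw [hsubtype, LinearMap.rTensor_comp]
  exact LinearMap.range_comp_le_range _ _

theorem Module.Basis.repr_lid_rTensor_baseChange {K A B ι : Type*} [CommRing K] [AddCommGroup A]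
    [Module K A] [CommRing B] [Algebra K B] (c : Module.Basis ι K A) (ψ : B →ₗ[K] K)
    (x : B ⊗[K] A) (i : ι) :
    c.repr (TensorProduct.lid K A (ψ.rTensor A x)) i = ψ ((c.baseChange B).repr x i) := by
  induction x using TensorProduct.induction_on with
  | zero => simp
  | tmul b a => simp [Module.Basis.baseChange_repr_tmul, mul_comm]
  | add x y hx hy => simp_all

section IsAlgClosed

variable {K A B : Type*} [Field K] [IsAlgClosed K] [CommRing A] [Algebra K A] [NoZeroDivisors A]
  [CommRing B] [Algebra K B] [NoZeroDivisors B]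

theorem noZeroDivisors_tensorProduct_of_finiteType [Algebra.FiniteType K B] :
    NoZeroDivisors (B ⊗[K] A) := by
  refine ⟨fun {x y} hxy => ?_⟩
  by_contra! hne
  let c := Module.Basis.ofVectorSpace K A
  have exists_coeff_ne_zero : ∀ z : B ⊗[K] A, z ≠ 0 → ∃ i, (c.baseChange B).repr z i ≠ 0 :=
    fun z hz => by
      by_contra! h
      exact hz ((c.baseChange B).repr.map_eq_zero_iff.mp (Finsupp.ext h))
  obtain ⟨i, hi⟩ := exists_coeff_ne_zero x hne.1
  obtain ⟨j, hj⟩ := exists_coeff_ne_zero y hne.2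
  obtain ⟨ψ, hψ⟩ := exists_algHom_apply_ne_zero_of_isAlgClosed (K := K) (mul_ne_zero hi hj)
  rw [map_mul] at hψ
  let θ : B ⊗[K] A →ₐ[K] A :=
    (Algebra.TensorProduct.lid K A).toAlgHom.comp (Algebra.TensorProduct.map ψ (AlgHom.id K A))
  have hθ : ∀ z k, ψ ((c.baseChange B).repr z k) ≠ 0 → θ z ≠ 0 := fun z k hz h0 => hz <| by
    have h := c.repr_lid_rTensor_baseChange ψ.toLinearMap z k
    rw [show TensorProduct.lid K A (ψ.toLinearMap.rTensor A z) = θ z from rfl, h0] at h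
    simpa using h.symm
  exact mul_ne_zero (hθ x i (left_ne_zero_of_mul hψ)) (hθ y j (right_ne_zero_of_mul hψ))
    (by rw [← map_mul, hxy, map_zero])

theorem noZeroDivisors_tensorProduct_of_isAlgClosed : NoZeroDivisors (B ⊗[K] A) := by
  refine ⟨fun {x y} hxy => ?_⟩
  obtain ⟨B', hB', hsub⟩ := Subalgebra.exists_fg_subset_range_map_val {x, y} (Set.toFinite _)
  obtain ⟨x', rfl⟩ := hsub (.inl rfl)
  obtain ⟨y', rfl⟩ := hsub (.inr rfl)
  have : Algebra.FiniteType K B' := (Subalgebra.fg_iff_finiteType B').mp hB'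
  have : NoZeroDivisors (B' ⊗[K] A) := noZeroDivisors_tensorProduct_of_finiteType
  have hinj : Function.Injective (Algebra.TensorProduct.map B'.val (AlgHom.id K A)) :=
    Module.Flat.rTensor_preserves_injective_linearMap B'.val.toLinearMap Subtype.val_injective
  rw [← map_mul, ← map_zero (Algebra.TensorProduct.map B'.val (AlgHom.id K A)), hinj.eq_iff,
    mul_eq_zero] at hxy
  rcases hxy with h | h <;> simp [h]

theorem isDomain_tensorProduct_of_isAlgClosed [Nontrivial A] [Nontrivial B] :
    IsDomain (B ⊗[K] A) :=
  have := noZeroDivisors_tensorProduct_of_isAlgClosed (K := K) (A := A) (B := B)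
  have := Algebra.TensorProduct.nontrivial_of_algebraMap_injective_of_flat_left K B A
    (algebraMap K A).injective
  NoZeroDivisors.to_isDomain _

end IsAlgClosed

theorem MvPolynomial.map_algebraMap_eq_map_ker {K L σ : Type*} [CommRing K] [CommRing L]
    [Algebra K L] (I : Ideal (MvPolynomial σ K)) :
    I.map (MvPolynomial.map (algebraMap K L)) =
      (RingHom.ker (Algebra.TensorProduct.map (AlgHom.id K L) (Ideal.Quotient.mkₐ K I))).map
        (MvPolynomial.algebraTensorAlgEquiv K L) := by
  have he : (MvPolynomial.algebraTensorAlgEquiv (σ := σ) K L : _ →+* _).comp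
      (Algebra.TensorProduct.includeRight : MvPolynomial σ K →ₐ[K] L ⊗[K] _).toRingHom =
        MvPolynomial.map (algebraMap K L) := by
    ext p <;> simp [MvPolynomial.algebraTensorAlgEquiv_tmul]
  have hker : RingHom.ker (Ideal.Quotient.mkₐ K I) = I := Ideal.Quotient.mkₐ_ker K I
  rw [Algebra.TensorProduct.lTensor_ker _ Ideal.Quotient.mk_surjective, hker, ← he,
    ← Ideal.map_map]
  rfl

/-- If `L ⊂ L'` is a field extension with `L` algebraically closed, then the extension
of a prime ideal `P ⊂ L[x_1,…,x_n]` to `L'[x_1,…,x_n]` is again prime. -/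
theorem stmt_3 (L L' : Type*) [Field L] [IsAlgClosed L] [Field L'] [Algebra L L']
    (n : ℕ) (P : Ideal (MvPolynomial (Fin n) L)) (hP : P.IsPrime) :
    (P.map (MvPolynomial.map (algebraMap L L'))).IsPrime := by
  have : IsDomain (L' ⊗[L] (MvPolynomial (Fin n) L ⧸ P)) := isDomain_tensorProduct_of_isAlgClosed
  have := RingHom.ker_isPrime (Algebra.TensorProduct.map (AlgHom.id L L') (Ideal.Quotient.mkₐ L P))
  rw [MvPolynomial.map_algebraMap_eq_map_ker]
  exact Ideal.map_isPrime_of_equiv _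
end

section
/- Let L ⊂ L' be a field extension with L algebraically closed, and let I ⊂ S_L = L[x_1,…,x_n] be an ideal with minimal primes P_1,…,P_s. Then the minimal primes of the extended ideal I·S_{L'} ⊂ S_{L'} = L'[x_1,…,x_n] are exactly P_1·S_{L'},…,P_s·S_{L'}. -/
/-!
`L'[x]` is the base change `L[x] ⊗_L L'`, so it is faithfully flat over `L[x]` and extended
ideals contract back to themselves. For a prime `P`, `L'[x] / P·L'[x] ≅ (L[x]/P) ⊗_L L'`, and
this is a domain because `L` is algebraically closed: by the Nullstellensatz a nonzero element
of a finitely generated `L`-domain `B` survives some `L`-point `φ : B → L`, and applying `φ` to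
the coefficients of `u, v ∈ B ⊗_L A` with respect to an `L`-basis of `A` turns a relation
`u v = 0` into one in the domain `A`. So extension is an inclusion-preserving injection of
primes, with contraction as inverse, and minimal primes correspond.
-/

open TensorProduct

theorem Ideal.minimalPrimes_map_eq_image {A B : Type*} [CommRing A] [CommRing B]
    (f : A →+* B) (I : Ideal A)
    (hprime : ∀ P ∈ I.minimalPrimes, (P.map f).IsPrime)
    (hcomap : ∀ P ∈ I.minimalPrimes, (P.map f).comap f = P) :
    (I.map f).minimalPrimes = Ideal.map f '' I.minimalPrimes := by
  ext Q
  constructor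
  · intro hQ
    have := hQ.1.1
    obtain ⟨P, hP, hPQ⟩ := Ideal.exists_minimalPrimes_le (Ideal.map_le_iff_le_comap.mp hQ.1.2)
    have hPQ' : P.map f ≤ Q := Ideal.map_le_iff_le_comap.mpr hPQ
    exact ⟨P, hP, le_antisymm hPQ' (hQ.2 ⟨hprime P hP, Ideal.map_mono hP.1.2⟩ hPQ')⟩
  · rintro ⟨P, hP, rfl⟩
    refine ⟨⟨hprime P hP, Ideal.map_mono hP.1.2⟩, fun Q ⟨hQ, hIQ⟩ hQP => ?_⟩
    have hQP' : Q.comap f ≤ P := hcomap P hP ▸ Ideal.comap_mono hQP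
    exact Ideal.map_le_iff_le_comap.mpr
      (hP.2 ⟨Ideal.comap_isPrime f Q, Ideal.map_le_iff_le_comap.mp hIQ⟩ hQP')

theorem Ideal.comap_map_eq_self_of_isPushout (L : Type*) {A C B : Type*} [Field L]
    [CommRing A] [CommRing C] [Nontrivial C] [CommRing B]
    [Algebra L A] [Algebra L C] [Algebra A B] [Algebra C B] [Algebra L B]
    [IsScalarTower L C B] [IsScalarTower L A B] [Algebra.IsPushout L A C B] (I : Ideal A) :
    (I.map (algebraMap A B)).comap (algebraMap A B) = I := by
  have : Module.FaithfullyFlat A B :=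
    .of_linearEquiv A (A ⊗[L] C) (Algebra.IsPushout.equiv L A C B).symm.toLinearEquiv
  exact Ideal.comap_map_eq_self_of_faithfullyFlat I

theorem Algebra.TensorProduct.basis_repr_lift_apply {L A B ι : Type*} [CommRing L]
    [CommRing A] [CommRing B] [Algebra L A] [Algebra L B] (bA : Module.Basis ι L A)
    (φ : B →ₐ[L] L) (w : B ⊗[L] A) (i : ι) :
    bA.repr (lift ((Algebra.ofId L A).comp φ) (AlgHom.id L A) (fun _ _ => .all _ _) w) i =
      φ ((basis B bA).repr w i) := by
  induction w using TensorProduct.induction_on with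
  | zero => simp
  | tmul b a => simp [basis_repr_tmul, Algebra.ofId_apply, ← Algebra.smul_def]
  | add x y hx hy => simp [hx, hy]

section IsAlgClosed

variable {L : Type*} [Field L] [IsAlgClosed L]

theorem exists_algHom_apply_ne_zero {B : Type*} [CommRing B] [IsReduced B] [Algebra L B]
    [Algebra.FiniteType L B] {b : B} (hb : b ≠ 0) : ∃ φ : B →ₐ[L] L, φ b ≠ 0 := by
  have : IsJacobsonRing B := isJacobsonRing_of_finiteType (A := L)
  obtain ⟨m, hm, hbm⟩ : ∃ m : Ideal B, m.IsMaximal ∧ b ∉ m := by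
    by_contra! h
    have hb' : b ∈ (⊥ : Ideal B).jacobson := Ideal.mem_sInf.mpr fun J hJ => h J hJ.2
    rw [← Ideal.radical_eq_jacobson] at hb'
    exact hb (IsReduced.eq_zero b hb')
  let := Ideal.Quotient.field m
  have : Module.Finite L (B ⧸ m) := finite_of_finite_type_of_isJacobsonRing L (B ⧸ m)
  refine ⟨(IsAlgClosed.lift : B ⧸ m →ₐ[L] L).comp (Ideal.Quotient.mkₐ L m), fun h => hbm ?_⟩
  rw [← Ideal.Quotient.eq_zero_iff_mem]
  exact (map_eq_zero_iff (IsAlgClosed.lift : B ⧸ m →ₐ[L] L) (RingHom.injective _)).mp h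

theorem Algebra.TensorProduct.isDomain_of_isAlgClosed {A B : Type*} [CommRing A] [CommRing B]
    [IsDomain A] [IsDomain B] [Algebra L A] [Algebra L B] [Algebra.FiniteType L B] :
    IsDomain (B ⊗[L] A) := by
  let bA := Module.Basis.ofVectorSpace L A
  let bT := basis B bA
  have : Nonempty (Module.Basis.ofVectorSpaceIndex L A) := bA.index_nonempty
  have : Nontrivial (B ⊗[L] A) := bT.repr.toEquiv.nontrivial
  refine @NoZeroDivisors.to_isDomain _ _ _ ⟨fun {u v} huv => ?_⟩
  by_contra! h
  obtain ⟨i, hi⟩ := Finsupp.ne_iff.mp (bT.repr.map_ne_zero_iff.mpr h.1)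
  obtain ⟨j, hj⟩ := Finsupp.ne_iff.mp (bT.repr.map_ne_zero_iff.mpr h.2)
  obtain ⟨φ, hφ⟩ := exists_algHom_apply_ne_zero (L := L) (mul_ne_zero hi hj)
  let Φ := lift ((Algebra.ofId L A).comp φ) (AlgHom.id L A) fun _ _ => .all _ _
  have hΦu : Φ u ≠ 0 := fun h0 => hφ <| by
    rw [map_mul, ← basis_repr_lift_apply bA φ u, h0, map_zero, Finsupp.zero_apply, zero_mul]
  have hΦv : Φ v ≠ 0 := fun h0 => hφ <| by
    rw [map_mul, ← basis_repr_lift_apply bA φ v, h0, map_zero, Finsupp.zero_apply, mul_zero]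
  exact mul_ne_zero hΦu hΦv (by rw [← map_mul, huv, map_zero])

variable (L) in
theorem Ideal.isPrime_map_of_isPushout {A C B : Type*} [CommRing A] [CommRing C] [IsDomain C]
    [CommRing B] [Algebra L A] [Algebra L C] [Algebra A B] [Algebra C B] [Algebra L B]
    [IsScalarTower L C B] [IsScalarTower L A B] [Algebra.IsPushout L A C B]
    [Algebra.FiniteType L A] (P : Ideal A) [P.IsPrime] :
    (P.map (algebraMap A B)).IsPrime := by
  let e := Algebra.IsPushout.equiv L A C B
  have hmap : P.map (algebraMap A B) =
      (P.map (algebraMap A (A ⊗[L] C))).map (e : A ⊗[L] C →+* B) := by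
    rw [Ideal.map_map, ← e.toAlgHom.comp_algebraMap]; rfl
  have : IsDomain ((A ⧸ P) ⊗[L] C) := Algebra.TensorProduct.isDomain_of_isAlgClosed
  have : (P.map (algebraMap A (A ⊗[L] C))).IsPrime := by
    rw [← Ideal.Quotient.isDomain_iff_prime]
    exact (Algebra.TensorProduct.quotientTensorEquiv (R := L) L C A P).symm.toMulEquiv.isDomain _
  rw [hmap]
  exact Ideal.map_isPrime_of_equiv e

end IsAlgClosed

/-- If `L ⊂ L'` is a field extension with `L` algebraically closed and
`I ⊂ L[x_1,…,x_n]` is an ideal, then the minimal primes of the extended ideal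
`I·L'[x_1,…,x_n]` are exactly the extensions of the minimal primes of `I`. -/
theorem stmt_5 (L L' : Type*) [Field L] [IsAlgClosed L] [Field L'] [Algebra L L']
    (n : ℕ) (I : Ideal (MvPolynomial (Fin n) L)) :
    (I.map (MvPolynomial.map (algebraMap L L'))).minimalPrimes =
      (fun P => P.map (MvPolynomial.map (algebraMap L L'))) '' I.minimalPrimes := by
  -- Its `algebraMap` is `MvPolynomial.map (algebraMap L L')`, and Mathlib knows that
  -- `MvPolynomial (Fin n) L'` is then the pushout of `L'` and `MvPolynomial (Fin n) L` over `L`.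
  let := MvPolynomial.algebraMvPolynomial (σ := Fin n) (R := L) (S := L')
  refine Ideal.minimalPrimes_map_eq_image _ I (fun P hP => ?_)
    (fun P _ => Ideal.comap_map_eq_self_of_isPushout L (C := L') P)
  have := hP.1.1
  exact Ideal.isPrime_map_of_isPushout L (C := L') P
end

section
/- Let K be a field, S = K[x_1,…,x_n] with the standard grading, and let d ∈ ℕ. There are only finitely many monomial ideals of S generated in degrees ≤ d with a prescribed Hilbert function. More precisely: the set of monomial ideals of S having a fixed Hilbert function H : ℕ → ℕ is finite. -/
/-!
Monomial ideals correspond to upper sets of exponents. If infinitely many of them had Hilbert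
function `H`, compactness of the Cantor space `(ℕⁿ → Bool)` would give an upper set `J` that agrees,
on every finite set of exponents, with some member `M ≠ J` of the family. Agreement in each single
degree shows that the monomial ideal of `J` also has Hilbert function `H`, and agreement on a
finite generating set of `J` (Hilbert's basis theorem) gives `J ⊆ M`. But nested monomial ideals
with the same Hilbert function coincide, so `M = J`.
-/

open MvPolynomial Topology

theorem Set.Infinite.exists_accumulation_set {X : Type*} {𝓜 : Set (Set X)} (h𝓜 : 𝓜.Infinite) :
    ∃ J : Set X, ∀ T : Set X, T.Finite → ∃ M ∈ 𝓜, M ≠ J ∧ ∀ x ∈ T, (x ∈ M ↔ x ∈ J) := by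
  classical
  let χ : Set X → X → Bool := fun M x => decide (x ∈ M)
  have hχ : χ.Injective := fun M N h => Set.ext fun x => by simpa [χ] using congrFun h x
  obtain ⟨g, hg⟩ := (h𝓜.image hχ.injOn).exists_accPt_principal
  have hgJ : g = χ {x | g x} := by ext x; simp [χ]
  refine ⟨{x | g x}, fun T hT => ?_⟩
  have hnhds : T.pi (fun x => {g x}) ∈ 𝓝 g := set_pi_mem_nhds hT fun x _ => by simp
  obtain ⟨_, ⟨hagree, M, hM, rfl⟩, hne⟩ := accPt_iff_nhds.mp hg _ hnhds
  refine ⟨M, hM, fun h => hne (h ▸ hgJ.symm), fun x hx => ?_⟩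
  show x ∈ M ↔ g x = true
  rw [← hagree x hx]
  simp [χ]

noncomputable section

namespace MvPolynomial

variable {σ K : Type*}

section CommSemiring
variable (K) [CommSemiring K]

def monomialIdeal (M : Set (σ →₀ ℕ)) : Ideal (MvPolynomial σ K) :=
  Ideal.span ((fun ν => monomial ν (1 : K)) '' M)

def monomialExponents (I : Ideal (MvPolynomial σ K)) : Set (σ →₀ ℕ) :=
  {μ | monomial μ (1 : K) ∈ I}

variable {K}

theorem isUpperSet_monomialExponents (I : Ideal (MvPolynomial σ K)) :
    IsUpperSet (monomialExponents K I) := by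
  intro μ ν hle hμ
  have h : monomial ν (1 : K) = monomial (ν - μ) 1 * monomial μ 1 := by
    rw [monomial_mul, one_mul, tsub_add_cancel_of_le hle]
  show monomial ν (1 : K) ∈ I
  rw [h]
  exact I.mul_mem_left _ hμ

theorem monomialIdeal_monomialExponents {I : Ideal (MvPolynomial σ K)} {M : Set (σ →₀ ℕ)}
    (hI : I = monomialIdeal K M) : monomialIdeal K (monomialExponents K I) = I := by
  subst hI
  refine le_antisymm (Ideal.span_le.mpr ?_) (Ideal.span_mono (Set.image_mono fun ν hν => ?_))
  · rintro _ ⟨μ, hμ, rfl⟩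
    exact hμ
  · exact Ideal.subset_span ⟨ν, hν, rfl⟩

theorem mem_monomialIdeal_iff {M : Set (σ →₀ ℕ)} (hM : IsUpperSet M) {p : MvPolynomial σ K} :
    p ∈ monomialIdeal K M ↔ ∀ ν ∈ p.support, ν ∈ M := by
  rw [monomialIdeal, mem_ideal_span_monomial_image]
  exact forall₂_congr fun ν _ => ⟨fun ⟨μ, hμ, hle⟩ => hM hle hμ, fun hν => ⟨ν, hν, le_rfl⟩⟩

theorem monomial_mem_monomialIdeal_iff [Nontrivial K] {M : Set (σ →₀ ℕ)} (hM : IsUpperSet M)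
    {μ : σ →₀ ℕ} : monomial μ (1 : K) ∈ monomialIdeal K M ↔ μ ∈ M := by
  classical
  rw [mem_monomialIdeal_iff hM, support_monomial, if_neg one_ne_zero]
  simp

end CommSemiring

theorem exists_finite_monomialIdeal_eq {K : Type*} [CommRing K] [IsNoetherianRing K] [Finite σ]
    (M : Set (σ →₀ ℕ)) : ∃ T ⊆ M, T.Finite ∧ monomialIdeal K T = monomialIdeal K M := by
  obtain ⟨s, hsM, hs⟩ := (Submodule.fg_span_iff_fg_span_finset_subset _).mp
    (IsNoetherian.noetherian (monomialIdeal K M))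
  exact (Set.exists_subset_image_finite_and (p := fun t => Ideal.span t = _)).mp
    ⟨s, hsM, s.finite_toSet, hs.symm⟩

section Field
variable (K) [Field K]

def hilbertFunction (I : Ideal (MvPolynomial σ K)) (d : ℕ) : ℕ :=
  Module.finrank K ((homogeneousSubmodule σ K d).map (Ideal.Quotient.mkₐ K I).toLinearMap)

def homogeneousPart (I : Ideal (MvPolynomial σ K)) (d : ℕ) :
    Submodule K (homogeneousSubmodule σ K d) :=
  (I.restrictScalars K).comap (homogeneousSubmodule σ K d).subtype

variable {K}

theorem hilbertFunction_eq_finrank_quotient (I : Ideal (MvPolynomial σ K)) (d : ℕ) :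
    hilbertFunction K I d =
      Module.finrank K (homogeneousSubmodule σ K d ⧸ homogeneousPart K I d) := by
  have hker : LinearMap.ker (Ideal.Quotient.mkₐ K I).toLinearMap = I.restrictScalars K := by
    ext p
    simp [Ideal.Quotient.eq_zero_iff_mem]
  let f := (Ideal.Quotient.mkₐ K I).toLinearMap ∘ₗ (homogeneousSubmodule σ K d).subtype
  have hf : LinearMap.ker f = homogeneousPart K I d := by
    rw [LinearMap.ker_comp, hker, homogeneousPart]
  rw [hilbertFunction, ← hf, f.quotKerEquivRange.finrank_eq, LinearMap.range_comp,
    Submodule.range_subtype]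

theorem hilbertFunction_monomialIdeal_congr {M N : Set (σ →₀ ℕ)} (hM : IsUpperSet M)
    (hN : IsUpperSet N) {d : ℕ} (hMN : ∀ μ : σ →₀ ℕ, μ.degree = d → (μ ∈ M ↔ μ ∈ N)) :
    hilbertFunction K (monomialIdeal K M) d = hilbertFunction K (monomialIdeal K N) d := by
  suffices homogeneousPart K (monomialIdeal K M) d = homogeneousPart K (monomialIdeal K N) d by
    rw [hilbertFunction_eq_finrank_quotient, hilbertFunction_eq_finrank_quotient, this]
  ext ⟨p, hp⟩
  simp only [homogeneousPart, Submodule.mem_comap, Submodule.subtype_apply,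
    Submodule.restrictScalars_mem, mem_monomialIdeal_iff hM, mem_monomialIdeal_iff hN]
  refine forall₂_congr fun ν hν => hMN ν ?_
  by_contra hdeg
  exact (mem_support_iff.mp hν) (((mem_homogeneousSubmodule d p).mp hp).coeff_eq_zero hdeg)

theorem mem_of_le_of_hilbertFunction_eq [Finite σ] {I J : Ideal (MvPolynomial σ K)} (hIJ : I ≤ J)
    {d : ℕ} (hd : hilbertFunction K I d = hilbertFunction K J d) {p : MvPolynomial σ K}
    (hp : p ∈ homogeneousSubmodule σ K d) (hpJ : p ∈ J) : p ∈ I := by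
  have : Module.Finite K (homogeneousSubmodule σ K d) :=
    Module.Finite.iff_fg.mpr (homogeneousSubmodule_fg σ K d)
  rw [hilbertFunction_eq_finrank_quotient, hilbertFunction_eq_finrank_quotient] at hd
  have hle : homogeneousPart K I d ≤ homogeneousPart K J d := Submodule.comap_mono hIJ
  have heq := Submodule.eq_of_le_of_finrank_eq hle (by
    have hI := (homogeneousPart K I d).finrank_quotient_add_finrank
    have hJ := (homogeneousPart K J d).finrank_quotient_add_finrank
    omega)
  have hmem : (⟨p, hp⟩ : homogeneousSubmodule σ K d) ∈ homogeneousPart K J d := hpJ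
  rw [← heq] at hmem
  exact hmem

theorem eq_of_monomialIdeal_le_of_hilbertFunction_eq [Finite σ] {M N : Set (σ →₀ ℕ)}
    (hM : IsUpperSet M) (hN : IsUpperSet N) (hMN : monomialIdeal K M ≤ monomialIdeal K N)
    (hH : ∀ d, hilbertFunction K (monomialIdeal K M) d = hilbertFunction K (monomialIdeal K N) d) :
    M = N := by
  refine Set.ext fun μ => ?_
  rw [← monomial_mem_monomialIdeal_iff (K := K) hM, ← monomial_mem_monomialIdeal_iff (K := K) hN]
  exact ⟨fun h => hMN h, mem_of_le_of_hilbertFunction_eq hMN (hH _)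
    (isHomogeneous_monomial (1 : K) rfl)⟩

theorem finite_setOf_isUpperSet_hilbertFunction_eq [Finite σ] (H : ℕ → ℕ) :
    {M : Set (σ →₀ ℕ) |
      IsUpperSet M ∧ ∀ d, hilbertFunction K (monomialIdeal K M) d = H d}.Finite := by
  by_contra hinf
  obtain ⟨J, hJ⟩ := Set.Infinite.exists_accumulation_set hinf
  have hJ_upper : IsUpperSet J := by
    intro μ ν hle hμ
    obtain ⟨M, ⟨hM, -⟩, -, hagree⟩ := hJ {μ, ν} (by simp)
    exact (hagree ν (by simp)).mp (hM hle ((hagree μ (by simp)).mpr hμ))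
  have hJ_hilbert : ∀ d, hilbertFunction K (monomialIdeal K J) d = H d := by
    intro d
    obtain ⟨M, ⟨hM, hMH⟩, -, hagree⟩ := hJ _ (Finsupp.finite_of_degree_eq d)
    rw [← hMH d]
    exact hilbertFunction_monomialIdeal_congr hJ_upper hM fun μ hμ => (hagree μ hμ).symm
  obtain ⟨T, hTJ, hT, hTspan⟩ := exists_finite_monomialIdeal_eq (K := K) J
  obtain ⟨M, ⟨hM, hMH⟩, hne, hagree⟩ := hJ T hT
  have hJM : monomialIdeal K J ≤ monomialIdeal K M :=
    hTspan ▸ Ideal.span_mono (Set.image_mono fun μ hμ => (hagree μ hμ).mpr (hTJ hμ))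
  exact hne (eq_of_monomialIdeal_le_of_hilbertFunction_eq hJ_upper hM hJM
    fun d => (hJ_hilbert d).trans (hMH d).symm).symm

end Field

end MvPolynomial

end

/-- There are only finitely many monomial ideals of `K[x_1,…,x_n]` with a prescribed
Hilbert function `H`, where the Hilbert function of `S/I` in degree `d` is the
`K`-dimension of the image of the degree-`d` homogeneous component under the quotient
map `S → S/I`. -/
theorem stmt_13 (K : Type*) [Field K] (n : ℕ) (H : ℕ → ℕ) :
    {I : Ideal (MvPolynomial (Fin n) K) |
      (∃ M : Set (Fin n →₀ ℕ), I = Ideal.span ((fun ν => monomial ν (1 : K)) '' M)) ∧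
      ∀ d : ℕ, Module.finrank K
        ((homogeneousSubmodule (Fin n) K d).map
          (Ideal.Quotient.mkₐ K I).toLinearMap) = H d}.Finite := by
  refine ((finite_setOf_isUpperSet_hilbertFunction_eq (K := K) (σ := Fin n) H).image
    (monomialIdeal K)).subset ?_
  rintro I ⟨⟨M, hM⟩, hH⟩
  have hI := monomialIdeal_monomialExponents hM
  exact ⟨monomialExponents K I, ⟨isUpperSet_monomialExponents I, by rw [hI]; exact hH⟩, hI⟩
end
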